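/- arXiv:1809.08507 — 2 statements merged into one kernel-verified Lean document; each statement's English description precedes it below -/
import Mathlib

section
/- For 1 ≤ m ≤ 2k+1, the vertex-isoperimetric number of the hypercube satisfies b_v(m, Q_{2k}) = 1 + (m/2)(4k − m − 1), i.e., the minimum over all m-element vertex sets S of Q_{2k} of |N(S)| equals 1 + m(4k−m−1)/2. -/
open Finset

variable {V : Type*} [Fintype V] [DecidableEq V]

/-- Out-degree of `v` in the digraph given by `D`. -/
def outDeg (D : V → V → Bool) (v : V) : ℕ :=
  (Finset.univ.filter (fun w => D v w = true)).card

/-- In-degree of `v` in the digraph given by `D`. -/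
def inDeg (D : V → V → Bool) (v : V) : ℕ :=
  (Finset.univ.filter (fun w => D w v = true)).card

/-- `D` is an orientation of the simple graph `G`: every arc of `D` is an edge of `G`,
and every edge of `G` receives exactly one of the two directions. -/
def IsOrientation (G : SimpleGraph V) (D : V → V → Bool) : Prop :=
  (∀ v w, D v w = true → G.Adj v w) ∧ ∀ v w, G.Adj v w → (D v w = true ↔ D w v = false)

/-- An Eulerian orientation: an orientation with in-degree equal to out-degree everywhere. -/
def IsEulerianOrientation (G : SimpleGraph V) (D : V → V → Bool) : Prop :=
  IsOrientation G D ∧ ∀ v, inDeg D v = outDeg D v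

/-- Number of arcs of `D` going from `A` to `B`. -/
def arcs (D : V → V → Bool) (A B : Finset V) : ℕ :=
  ((A ×ˢ B).filter (fun p => D p.1 p.2 = true)).card

/-- The digraph `D` is strongly connected on the vertex set `A`. -/
def StronglyConnectedOn (D : V → V → Bool) (A : Finset V) : Prop :=
  ∀ v ∈ A, ∀ w ∈ A,
    Relation.ReflTransGen (fun a b => a ∈ A ∧ b ∈ A ∧ D a b = true) v w

/-- The digraph `D` is strongly `k`-vertex-connected: it has at least `k+1` vertices and
deleting any set of at most `k-1` vertices leaves a strongly connected digraph. -/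
def StronglyKConnected (k : ℕ) (D : V → V → Bool) : Prop :=
  k + 1 ≤ Fintype.card V ∧
    ∀ Z : Finset V, Z.card ≤ k - 1 → StronglyConnectedOn D (Finset.univ \ Z)

/-- The `d`-dimensional hypercube graph on vertex set `Fin d → Bool`. -/
def cube (d : ℕ) : SimpleGraph (Fin d → Bool) where
  Adj v w := (Finset.univ.filter (fun i => v i ≠ w i)).card = 1
  symm := by
    constructor
    intro v w h
    beta_reduce at h ⊢
    have he : (Finset.univ.filter (fun i => w i ≠ v i))
        = (Finset.univ.filter (fun i => v i ≠ w i)) := by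
      apply Finset.filter_congr; intro i _; simp [ne_comm]
    rw [he]; exact h
  loopless := by constructor; intro v h; simp at h

/-- Number of external neighbors of the vertex set `S` in `G`. -/
noncomputable def extNbrCard (G : SimpleGraph V) (S : Finset V) : ℕ :=
  {w | w ∉ S ∧ ∃ v ∈ S, G.Adj v w}.ncard

/-- Harper's vertex-isoperimetric quantity `b_v(m, Q_{2k})`: the minimum number of external
neighbors over all vertex sets of size `m` in the hypercube `Q_{2k}`. -/
noncomputable def bv (k m : ℕ) : ℕ :=
  sInf {n | ∃ S : Finset (Fin (2 * k) → Bool), S.card = m ∧ extNbrCard (cube (2 * k)) S = n}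

/-!
Slice `Q_{n+1}` along the first coordinate into `S₀ = {x | (false, x) ∈ S}` and
`S₁ = {x | (true, x) ∈ S}`. A vertex `(b, x)` is an outer neighbour of `S` exactly when
`x ∉ S_b` and `x` is either an outer neighbour of `S_b` in `Q_n` or lies in `S_{!b}`.

Put `F(n, m) = 1 + m(2n - m - 1)/2` (`Hypercube.isoBound`). Then
`F(n+1, a+b) = F(n, a) + F(n, b) - (a-1)(b-1)` and `F(n+1, m) = F(n, m) + m`, so induction
on `n` gives `|N(S)| ≥ F(n, |S|)` for every nonempty `S`: use the first identity when both
slices are nonempty and the second when one of them is empty.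
The star made of `0` and its first `t` neighbours attains `F(n, t+1)`, by the same induction,
because its slices are a smaller star and `{0}`.
-/

section ExteriorNeighbours

variable (G : SimpleGraph V) [DecidableRel G.Adj]

def extNbrs (S : Finset V) : Finset V :=
  {w | w ∉ S ∧ ∃ v ∈ S, G.Adj v w}

lemma extNbrCard_eq_card_extNbrs (S : Finset V) : extNbrCard G S = #(extNbrs G S) := by
  rw [extNbrCard, ← Set.ncard_coe_finset]
  congr
  ext
  simp [extNbrs]

@[simp] lemma extNbrs_empty : extNbrs G ∅ = ∅ := by
  simp [extNbrs]

end ExteriorNeighbours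

lemma Fin.tail_const {n : ℕ} {α : Type*} (a : α) :
    Fin.tail (fun _ : Fin (n + 1) => a) = fun _ => a :=
  rfl

lemma hammingDist_cons {n : ℕ} {β : Fin (n + 1) → Type*} [∀ i, DecidableEq (β i)]
    (a : β 0) (x : ∀ i : Fin n, β i.succ) (y : ∀ i, β i) :
    hammingDist (Fin.cons a x) y = (if a = y 0 then 0 else 1) + hammingDist x (Fin.tail y) := by
  simp only [hammingDist, card_filter, Fin.sum_univ_succ, Fin.cons_zero, Fin.cons_succ, ne_eq,
    ite_not]
  rfl

namespace Hypercube

lemma adj_iff {n : ℕ} {v w : Fin n → Bool} : (cube n).Adj v w ↔ hammingDist v w = 1 :=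
  Iff.rfl

instance (n : ℕ) : DecidableRel (cube n).Adj := fun _ _ => decidable_of_iff _ adj_iff.symm

lemma adj_cons_cons_iff {n : ℕ} {a b : Bool} {x y : Fin n → Bool} :
    (cube (n + 1)).Adj (Fin.cons a x) (Fin.cons b y) ↔
      a = b ∧ (cube n).Adj x y ∨ a ≠ b ∧ x = y := by
  rw [adj_iff, adj_iff, hammingDist_cons, Fin.cons_zero, Fin.tail_cons]
  by_cases hab : a = b <;> simp [hab, hammingDist_eq_zero]

def isoBound (n m : ℕ) : ℚ := 1 + m / 2 * (2 * n - m - 1)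

lemma isoBound_zero_one : isoBound 0 1 = 0 := by
  norm_num [isoBound]

lemma isoBound_succ (n m : ℕ) : isoBound (n + 1) m = isoBound n m + m := by
  simp only [isoBound]
  push_cast
  ring

lemma isoBound_succ_add (n a b : ℕ) :
    isoBound (n + 1) (a + b) = isoBound n a + isoBound n b - (a - 1) * (b - 1) := by
  simp only [isoBound]
  push_cast
  ring

section Slices

variable {n : ℕ}

def slice (b : Bool) (S : Finset (Fin (n + 1) → Bool)) : Finset (Fin n → Bool) :=
  {x | Fin.cons b x ∈ S}

@[simp] lemma mem_slice {b : Bool} {S : Finset (Fin (n + 1) → Bool)} {x : Fin n → Bool} :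
    x ∈ slice b S ↔ Fin.cons b x ∈ S := by
  simp [slice]

lemma card_slice (b : Bool) (S : Finset (Fin (n + 1) → Bool)) :
    #(slice b S) = #{v ∈ S | v 0 = b} := by
  refine card_nbij' (fun x => (Fin.cons b x : Fin (n + 1) → Bool)) Fin.tail ?_ ?_ ?_ ?_
  · intro x hx
    simpa using hx
  · intro v hv
    simp only [coe_filter, Set.mem_ofPred_eq] at hv
    simpa [← hv.2] using hv.1
  · intro x _
    exact Fin.tail_cons _ _
  · intro v hv
    simp only [coe_filter, Set.mem_ofPred_eq] at hv
    simp [← hv.2]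

lemma card_slice_false_add_card_slice_true (S : Finset (Fin (n + 1) → Bool)) :
    #(slice false S) + #(slice true S) = #S := by
  rw [card_slice, card_slice, ← card_filter_add_card_filter_not (s := S) (fun v => v 0 = false)]
  simp only [Bool.not_eq_false]

lemma slice_extNbrs (b : Bool) (S : Finset (Fin (n + 1) → Bool)) :
    slice b (extNbrs (cube (n + 1)) S) =
      extNbrs (cube n) (slice b S) ∪ (slice (!b) S \ slice b S) := by
  ext x
  simp only [extNbrs, mem_slice, mem_filter, mem_univ, true_and, mem_union, mem_sdiff,
    Fin.exists_fin_succ_pi, adj_cons_cons_iff]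
  constructor
  · rintro ⟨hx, c, y, hy, ⟨rfl, hadj⟩ | ⟨hne, rfl⟩⟩
    · exact Or.inl ⟨hx, y, hy, hadj⟩
    · obtain rfl : c = !b := by cases b <;> cases c <;> simp_all
      exact Or.inr ⟨hy, hx⟩
  · rintro (⟨hx, y, hy, hadj⟩ | ⟨hx', hx⟩)
    · exact ⟨hx, b, y, hy, Or.inl ⟨rfl, hadj⟩⟩
    · exact ⟨hx, !b, x, hx', Or.inr ⟨by simp, rfl⟩⟩

lemma card_extNbrs_succ (S : Finset (Fin (n + 1) → Bool)) :
    #(extNbrs (cube (n + 1)) S) =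
      #(extNbrs (cube n) (slice false S) ∪ (slice true S \ slice false S)) +
        #(extNbrs (cube n) (slice true S) ∪ (slice false S \ slice true S)) := by
  rw [← card_slice_false_add_card_slice_true, slice_extNbrs, slice_extNbrs, Bool.not_false,
    Bool.not_true]

lemma isoBound_succ_add_le_card_union_add {S₀ S₁ : Finset (Fin n → Bool)}
    (ih : ∀ T : Finset (Fin n → Bool), T.Nonempty → isoBound n #T ≤ #(extNbrs (cube n) T))
    (h₀ : S₀.Nonempty) :
    isoBound (n + 1) (#S₀ + #S₁) ≤
      #(extNbrs (cube n) S₀ ∪ (S₁ \ S₀)) + #(extNbrs (cube n) S₁ ∪ (S₀ \ S₁)) := by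
  have hN₀ : #(extNbrs (cube n) S₀) ≤ #(extNbrs (cube n) S₀ ∪ (S₁ \ S₀)) :=
    card_le_card subset_union_left
  have hN₁ : #(extNbrs (cube n) S₁) ≤ #(extNbrs (cube n) S₁ ∪ (S₀ \ S₁)) :=
    card_le_card subset_union_left
  rcases S₁.eq_empty_or_nonempty with rfl | h₁
  · simp only [card_empty, add_zero, isoBound_succ, sdiff_empty, extNbrs_empty, empty_union,
      empty_sdiff, union_empty] at hN₀ ⊢
    linarith [ih S₀ h₀]
  · have hsub : (0 : ℚ) ≤ (#S₀ - 1) * (#S₁ - 1) :=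
      mul_nonneg (sub_nonneg.2 (Nat.one_le_cast.2 h₀.card_pos))
        (sub_nonneg.2 (Nat.one_le_cast.2 h₁.card_pos))
    rw [isoBound_succ_add]
    linarith [ih S₀ h₀, ih S₁ h₁, (Nat.cast_le (α := ℚ)).mpr hN₀,
      (Nat.cast_le (α := ℚ)).mpr hN₁]

end Slices

theorem isoBound_le_card_extNbrs :
    ∀ {n : ℕ} (S : Finset (Fin n → Bool)), S.Nonempty →
      isoBound n #S ≤ #(extNbrs (cube n) S)
  | 0, S, hS => by
    have : #S = 1 := le_antisymm (by simpa using card_le_univ S) hS.card_pos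
    rw [this, isoBound_zero_one]
    positivity
  | n + 1, S, hS => by
    have hS' : (slice false S).Nonempty ∨ (slice true S).Nonempty := by
      rw [← card_pos, ← card_slice_false_add_card_slice_true] at hS
      simp only [← card_pos]
      omega
    rw [card_extNbrs_succ, ← card_slice_false_add_card_slice_true, Nat.cast_add]
    rcases hS' with h₀ | h₁
    · exact isoBound_succ_add_le_card_union_add isoBound_le_card_extNbrs h₀
    · rw [add_comm #(slice false S), add_comm (#(extNbrs (cube n) (slice false S) ∪ _) : ℚ)]
      exact isoBound_succ_add_le_card_union_add isoBound_le_card_extNbrs h₁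

def star (n t : ℕ) : Finset (Fin n → Bool) :=
  {v | hammingDist v (fun _ => false) ≤ 1 ∧ ∀ j, v j = true → (j : ℕ) < t}

lemma star_zero (n : ℕ) : star n 0 = {fun _ => false} := by
  ext v
  simp only [star, mem_filter, mem_univ, true_and, mem_singleton, Nat.not_lt_zero, imp_false,
    Bool.not_eq_true]
  constructor
  · exact fun h => funext h.2
  · rintro rfl
    simp

lemma slice_false_star (n t : ℕ) : slice false (star (n + 1) t) = star n (t - 1) := by
  ext x
  simp [star, hammingDist_cons, Fin.tail_const, Fin.forall_fin_succ, Nat.lt_sub_iff_add_lt]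

lemma slice_true_star_zero (n : ℕ) : slice true (star (n + 1) 0) = ∅ := by
  ext x
  simp [star, Fin.exists_fin_succ]

lemma slice_true_star_succ (n t : ℕ) : slice true (star (n + 1) (t + 1)) = {fun _ => false} := by
  ext x
  simp +contextual [star, hammingDist_cons, Fin.forall_fin_succ, Fin.tail_const,
    hammingDist_eq_zero]

lemma star_sdiff_subset_extNbrs (n t : ℕ) :
    star n t \ {fun _ => false} ⊆ extNbrs (cube n) {fun _ => false} := by
  intro v hv
  simp only [star, mem_sdiff, mem_filter, mem_univ, true_and, mem_singleton] at hv
  simp only [extNbrs, mem_filter, mem_univ, true_and, mem_singleton, exists_eq_left, adj_iff]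
  refine ⟨hv.2, ?_⟩
  have := hammingDist_pos.2 hv.2
  rw [hammingDist_comm]
  omega

theorem card_star : ∀ {n t : ℕ}, t ≤ n → #(star n t) = t + 1
  | n, 0, _ => by rw [star_zero, card_singleton]
  | n + 1, t + 1, h => by
    rw [← card_slice_false_add_card_slice_true, slice_false_star, slice_true_star_succ,
      card_star (by omega), card_singleton, Nat.add_sub_cancel]
  | 0, _ + 1, h => absurd h (by omega)

theorem card_extNbrs_star_le :
    ∀ {n t : ℕ}, t ≤ n → #(extNbrs (cube n) (star n t)) ≤ isoBound n (t + 1)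
  | 0, 0, _ => by
    rw [isoBound_zero_one, star_zero]
    simp [extNbrs, Subsingleton.elim _ (fun _ => false : Fin 0 → Bool)]
  | n + 1, 0, _ => by
    have ih := card_extNbrs_star_le (n := n) (t := 0) n.zero_le
    rw [card_extNbrs_succ, slice_false_star, slice_true_star_zero, isoBound_succ]
    simp only [empty_sdiff, union_empty, extNbrs_empty, sdiff_empty, empty_union, Nat.cast_add,
      card_star n.zero_le, Nat.zero_sub]
    push_cast
    linarith
  | n + 1, t + 1, h => by
    have ih := card_extNbrs_star_le (n := n) (t := t) (by omega)
    have ih₀ := card_extNbrs_star_le (n := n) (t := 0) n.zero_le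
    rw [star_zero] at ih₀
    have hzero : {fun _ => false} \ star n t = ∅ :=
      sdiff_eq_empty_iff_subset.2 (singleton_subset_iff.2 (by simp [star]))
    have hrest := union_eq_left.2 (star_sdiff_subset_extNbrs n t)
    rw [card_extNbrs_succ, slice_false_star, slice_true_star_succ, Nat.add_sub_cancel, hzero,
      union_empty, hrest, Nat.cast_add, isoBound_succ_add (a := t + 1) (b := 1)]
    push_cast
    linarith

lemma card_extNbrs_star {n t : ℕ} (h : t ≤ n) :
    #(extNbrs (cube n) (star n t)) = isoBound n (t + 1) := by
  refine le_antisymm (card_extNbrs_star_le h) ?_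
  simpa [card_star h] using
    isoBound_le_card_extNbrs (star n t) (card_pos.1 (by rw [card_star h]; omega))

end Hypercube

theorem stmt5_general (k m : ℕ) (hm1 : 1 ≤ m) (hm2 : m ≤ 2 * k + 1) :
    (bv k m : ℚ) = 1 + (m : ℚ) / 2 * (4 * k - m - 1) := by
  obtain ⟨t, rfl⟩ : ∃ t, m = t + 1 := ⟨m - 1, by omega⟩
  have ht : t ≤ 2 * k := by omega
  have hleast : IsLeast {b | ∃ S : Finset (Fin (2 * k) → Bool), #S = t + 1 ∧
      extNbrCard (cube (2 * k)) S = b} (extNbrCard (cube (2 * k)) (Hypercube.star (2 * k) t)) := by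
    refine ⟨⟨_, Hypercube.card_star ht, rfl⟩, ?_⟩
    rintro _ ⟨S, hS, rfl⟩
    have hlow := Hypercube.isoBound_le_card_extNbrs S (card_pos.1 (by omega))
    rw [hS, ← Hypercube.card_extNbrs_star ht] at hlow
    simp only [extNbrCard_eq_card_extNbrs]
    exact_mod_cast hlow
  rw [bv, hleast.csInf_eq, extNbrCard_eq_card_extNbrs, Hypercube.card_extNbrs_star ht,
    Hypercube.isoBound]
  push_cast
  ring

/-- For `1 ≤ m ≤ 2k+1`, `b_v(m, Q_{2k}) = 1 + (m/2)(4k - m - 1)`. -/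
theorem stmt5 (k m : ℕ) (hk : 1 ≤ k) (hm1 : 1 ≤ m) (hm2 : m ≤ 2 * k + 1) :
    (bv k m : ℚ) = 1 + (m : ℚ) / 2 * (4 * k - m - 1) :=
  stmt5_general k m hm1 hm2
end

section
/- The hypercube Q_d is d-vertex-connected: for d ≥ 1, deleting any set of at most d−1 vertices from Q_d leaves a connected graph (with at least one vertex). -/
open Finset

variable {V : Type*} [Fintype V] [DecidableEq V]

/-!
Induct on `d`, viewing `Q_{d+1}` as two copies of `Q_d`, indexed by the last coordinate and joined
by a perfect matching. As `#Z ≤ d`, one copy meets `Z` in at most `d - 1` vertices, so its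
surviving vertices are connected by induction. Every surviving vertex `x` of the other copy reaches
that copy: through its matching edge, or else along a route `x → flipAt x i → flipAt x i` across.
If all of these were blocked, `Z` would meet the `d + 1` distinct columns `{x} × Bool` and
`{flipAt x i} × Bool`, which is impossible.
-/

def SimpleGraph.isolate {α : Type*} (G : SimpleGraph α) (Z : Finset α) : SimpleGraph α where
  Adj a b := a ∉ Z ∧ b ∉ Z ∧ G.Adj a b
  symm := ⟨fun _ _ ⟨ha, hb, h⟩ => ⟨hb, ha, h.symm⟩⟩

open SimpleGraph

abbrev flipAt {ι : Type*} [DecidableEq ι] (v : ι → Bool) (i : ι) : ι → Bool :=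
  Function.update v i (!v i)

lemma cube_adj_iff {d : ℕ} (v w : Fin d → Bool) : (cube d).Adj v w ↔ ∃ i, w = flipAt v i := by
  simp only [cube, Finset.card_eq_one, Finset.eq_singleton_iff_unique_mem, Finset.mem_filter,
    Finset.mem_univ, true_and, Function.eq_update_iff]
  exact exists_congr fun i => and_congr (by cases v i <;> cases w i <;> simp)
    ⟨fun h j hj => by_contra fun hne => hj (h j (Ne.symm hne)),
      fun h j hne => by_contra fun hj => hne (h j hj).symm⟩

lemma flipAt_injective {ι : Type*} [DecidableEq ι] (v : ι → Bool) : Function.Injective (flipAt v) := by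
  intro i j h
  by_contra hij
  simpa [Function.update_of_ne hij] using congrFun h i

lemma flipAt_ne_self {ι : Type*} [DecidableEq ι] (v : ι → Bool) (i : ι) : flipAt v i ≠ v := by
  intro h
  simpa using congrFun h i

lemma cube_adj_flipAt {d : ℕ} (v : Fin d → Bool) (i : Fin d) : (cube d).Adj v (flipAt v i) :=
  (cube_adj_iff v _).2 ⟨i, rfl⟩

lemma cube_adj_snoc {d : ℕ} {x y : Fin d → Bool} (b : Bool) (h : (cube d).Adj x y) :
    (cube (d + 1)).Adj (Fin.snoc x b) (Fin.snoc y b) := by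
  obtain ⟨i, rfl⟩ := (cube_adj_iff x y).1 h
  exact (cube_adj_iff _ _).2 ⟨i.castSucc, by rw [Fin.snoc_update, flipAt, Fin.snoc_castSucc]⟩

lemma cube_adj_snoc_not {d : ℕ} (x : Fin d → Bool) (b : Bool) :
    (cube (d + 1)).Adj (Fin.snoc x b) (Fin.snoc x (!b)) := by
  refine (cube_adj_iff _ _).2 ⟨Fin.last d, ?_⟩
  rw [flipAt, Fin.snoc_last, Fin.update_snoc_last]

lemma exists_flipAt_snoc_notMem {d : ℕ} {Z : Finset (Fin (d + 1) → Bool)} (hZ : #Z ≤ d)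
    {x : Fin d → Bool} {b : Bool} (hx : Fin.snoc x b ∈ Z) :
    ∃ i, ∀ c, Fin.snoc (flipAt x i) c ∉ Z := by
  by_contra! h
  have hsub : insert x (univ.image (flipAt x)) ⊆ Z.image Fin.init := by
    intro y hy
    simp only [mem_insert, mem_image, mem_univ, true_and] at hy ⊢
    rcases hy with rfl | ⟨i, rfl⟩
    · exact ⟨_, hx, Fin.init_snoc _ _⟩
    · obtain ⟨c, hc⟩ := h i
      exact ⟨_, hc, Fin.init_snoc _ _⟩
  have hx_notMem : x ∉ univ.image (flipAt x) := by
    simp only [mem_image, mem_univ, true_and, not_exists]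
    exact flipAt_ne_self x
  have := (card_le_card hsub).trans card_image_le
  rw [card_insert_of_notMem hx_notMem, card_image_of_injective _ (flipAt_injective x),
    card_univ, Fintype.card_fin] at this
  omega

def layer {d : ℕ} (Z : Finset (Fin (d + 1) → Bool)) (b : Bool) : Finset (Fin d → Bool) :=
  univ.filter fun x => Fin.snoc x b ∈ Z

lemma card_layer_add_card_layer_le {d : ℕ} (Z : Finset (Fin (d + 1) → Bool)) :
    #(layer Z true) + #(layer Z false) ≤ #Z := by
  have := card_le_card_of_injOn (s := univ.sigma (layer Z)) (t := Z)
    (fun p => Fin.snoc p.2 p.1) (fun p hp => by simpa [layer] using hp) ?_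
  · simpa using this
  · rintro ⟨b, x⟩ - ⟨c, y⟩ - h
    obtain ⟨rfl, rfl⟩ := Fin.snoc_injective2 h
    rfl

lemma isolate_cube_adj_snoc {d : ℕ} {Z : Finset (Fin (d + 1) → Bool)} {b : Bool}
    {x y : Fin d → Bool} (h : ((cube d).isolate (layer Z b)).Adj x y) :
    ((cube (d + 1)).isolate Z).Adj (Fin.snoc x b) (Fin.snoc y b) :=
  ⟨by simpa [layer] using h.1, by simpa [layer] using h.2.1, cube_adj_snoc b h.2.2⟩

lemma reachable_snoc {d : ℕ} {Z : Finset (Fin (d + 1) → Bool)} {b : Bool} {x y : Fin d → Bool}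
    (h : ((cube d).isolate (layer Z b)).Reachable x y) :
    ((cube (d + 1)).isolate Z).Reachable (Fin.snoc x b) (Fin.snoc y b) :=
  let f : (cube d).isolate (layer Z b) →g (cube (d + 1)).isolate Z :=
    ⟨fun x => Fin.snoc x b, isolate_cube_adj_snoc⟩
  h.map f

lemma exists_snoc_notMem_reachable {d : ℕ} {Z : Finset (Fin (d + 1) → Bool)} (hZ : #Z ≤ d)
    (b : Bool) {v : Fin (d + 1) → Bool} (hv : v ∉ Z) :
    ∃ y, Fin.snoc y b ∉ Z ∧ ((cube (d + 1)).isolate Z).Reachable v (Fin.snoc y b) := by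
  induction v using Fin.snocCases with | snoc x c => ?_
  obtain rfl | rfl : c = b ∨ c = !b := by cases b <;> cases c <;> simp
  · exact ⟨x, hv, .refl _⟩
  by_cases hxb : Fin.snoc x b ∈ Z
  · obtain ⟨i, hi⟩ := exists_flipAt_snoc_notMem hZ hxb
    have hflip : ((cube (d + 1)).isolate Z).Adj (Fin.snoc x !b) (Fin.snoc (flipAt x i) !b) :=
      ⟨hv, hi _, cube_adj_snoc _ (cube_adj_flipAt x i)⟩
    have hdown :
        ((cube (d + 1)).isolate Z).Adj (Fin.snoc (flipAt x i) !b) (Fin.snoc (flipAt x i) b) :=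
      ⟨hi _, hi _, (cube_adj_snoc_not _ b).symm⟩
    exact ⟨flipAt x i, hi b, hflip.reachable.trans hdown.reachable⟩
  · exact ⟨x, hxb, Adj.reachable ⟨hv, hxb, (cube_adj_snoc_not x b).symm⟩⟩

theorem reachable_isolate_cube {d : ℕ} {Z : Finset (Fin d → Bool)} (hZ : #Z ≤ d - 1)
    {v w : Fin d → Bool} (hv : v ∉ Z) (hw : w ∉ Z) : ((cube d).isolate Z).Reachable v w := by
  induction d with
  | zero => rw [Subsingleton.elim v w]
  | succ d ih =>
    obtain ⟨b, hb⟩ : ∃ b, #(layer Z b) ≤ d - 1 := by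
      have := card_layer_add_card_layer_le Z
      rcases le_total #(layer Z true) #(layer Z false) with h | h
      · exact ⟨true, by omega⟩
      · exact ⟨false, by omega⟩
    have hZ' : #Z ≤ d := by omega
    obtain ⟨y, hy, hvy⟩ := exists_snoc_notMem_reachable hZ' b hv
    obtain ⟨y', hy', hwy'⟩ := exists_snoc_notMem_reachable hZ' b hw
    have hyy' := reachable_snoc (ih hb (by simpa [layer] using hy) (by simpa [layer] using hy'))
    exact hvy.trans (hyy'.trans hwy'.symm)

theorem stmt18_general (d : ℕ) (Z : Finset (Fin d → Bool))
    (hZ : Z.card ≤ d - 1) :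
    (Finset.univ \ Z).Nonempty ∧
      ∀ v ∈ Finset.univ \ Z, ∀ w ∈ Finset.univ \ Z,
        Relation.ReflTransGen
          (fun a b => a ∈ Finset.univ \ Z ∧ b ∈ Finset.univ \ Z ∧ (cube d).Adj a b)
          v w := by
  refine ⟨sdiff_nonempty_of_card_lt_card ?_, fun v hv w hw => ?_⟩
  · have := Nat.lt_two_pow_self (n := d)
    simp only [card_univ, Fintype.card_fun, Fintype.card_bool, Fintype.card_fin]
    omega
  · rw [mem_sdiff] at hv hw
    simpa [isolate] using (reachable_iff_reflTransGen v w).1 (reachable_isolate_cube hZ hv.2 hw.2)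

/-- The hypercube `Q_d` is `d`-vertex-connected: for `d ≥ 1`, deleting
any set of at most `d-1` vertices leaves a nonempty connected graph. -/
theorem stmt18 (d : ℕ) (hd : 1 ≤ d) (Z : Finset (Fin d → Bool))
    (hZ : Z.card ≤ d - 1) :
    (Finset.univ \ Z).Nonempty ∧
      ∀ v ∈ Finset.univ \ Z, ∀ w ∈ Finset.univ \ Z,
        Relation.ReflTransGen
          (fun a b => a ∈ Finset.univ \ Z ∧ b ∈ Finset.univ \ Z ∧ (cube d).Adj a b)
          v w :=
  stmt18_general d Z hZ
end
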